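/- arXiv:math/0605201 — 3 statements merged into one kernel-verified Lean document; each statement's English description precedes it below -/
import Mathlib

section
/- Let t be a real number with t ≥ −1/12 and t ≠ 0. Then ∫_{−c_t}^{c_t} (t/(2π))·(x² − D_t)·√(c_t² − x²) dx = 1; that is, the equilibrium density of the external field V_t integrates to one over [−c_t, c_t]. -/
open MeasureTheory

noncomputable section

/-- The endpoint `c_t = √((2/(3t))(√(1+12t) − 1))` of the support of the equilibrium measure. -/
def cT (t : ℝ) : ℝ := Real.sqrt ((2 / (3 * t)) * (Real.sqrt (1 + 12 * t) - 1))

/-- The constant `D_t = −(1/(3t))(√(1+12t) + 2)` (denoted `d_t²` in the paper). -/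
def DT (t : ℝ) : ℝ := -(1 / (3 * t)) * (Real.sqrt (1 + 12 * t) + 2)

/-- The equilibrium density `(t/2π)(x² − D_t)√(c_t² − x²)`. -/
def eqDensity (t : ℝ) (x : ℝ) : ℝ :=
  (t / (2 * Real.pi)) * (x ^ 2 - DT t) * Real.sqrt ((cT t) ^ 2 - x ^ 2)

end

/-!
Substituting `x = c sin θ` turns `∫_{-c}^{c} (x² − D) √(c² − x²) dx` into a trigonometric
integral equal to `π c² (c² − 4D) / 8`. Writing `u = √(1 + 12t)`, one has `c_t² = 8 / (u + 1)`
because `(u − 1)(u + 1) = 12t`, and then `t c_t² (c_t² − 4 D_t) = 16` is an identity in `u`.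
-/

open Real intervalIntegral

theorem sqrt_sq_sub_sq_mul_sin {c θ : ℝ} (hc : 0 ≤ c) (hθ : θ ∈ Set.Icc (-(π / 2)) (π / 2)) :
    √(c ^ 2 - (c * sin θ) ^ 2) = c * cos θ := by
  have hsq : c ^ 2 - (c * sin θ) ^ 2 = (c * cos θ) ^ 2 := by
    linear_combination -c ^ 2 * sin_sq_add_cos_sq θ
  rw [hsq, sqrt_sq (mul_nonneg hc (cos_nonneg_of_mem_Icc hθ))]

theorem integral_mul_sqrt_sq_sub_sq {f : ℝ → ℝ} (hf : Continuous f) {c : ℝ} (hc : 0 ≤ c) :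
    ∫ x in -c..c, f x * √(c ^ 2 - x ^ 2) =
      c ^ 2 * ∫ θ in -(π / 2)..π / 2, f (c * sin θ) * cos θ ^ 2 := by
  have hsub := integral_comp_mul_deriv (a := -(π / 2)) (b := π / 2)
    (fun θ _ => (hasDerivAt_sin θ).const_mul c) (by fun_prop)
    (g := fun x => f x * √(c ^ 2 - x ^ 2)) (by fun_prop)
  rw [sin_neg, sin_pi_div_two, mul_one, mul_neg_one] at hsub
  rw [← hsub, ← intervalIntegral.integral_const_mul]
  refine integral_congr fun θ hθ => ?_
  rw [Set.uIcc_of_le (by linarith [pi_pos])] at hθ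
  simp only [Function.comp]
  rw [sqrt_sq_sub_sq_mul_sin hc hθ]
  ring

theorem integral_sq_sub_mul_sqrt_sq_sub_sq {c : ℝ} (hc : 0 ≤ c) (D : ℝ) :
    ∫ x in -c..c, (x ^ 2 - D) * √(c ^ 2 - x ^ 2) = π * c ^ 2 * (c ^ 2 - 4 * D) / 8 := by
  rw [integral_mul_sqrt_sq_sub_sq (by fun_prop) hc]
  have hexpand : ∀ θ, ((c * sin θ) ^ 2 - D) * cos θ ^ 2 =
      c ^ 2 * (sin θ ^ 2 * cos θ ^ 2) - D * cos θ ^ 2 := fun θ => by ring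
  simp only [hexpand]
  rw [intervalIntegral.integral_sub (Continuous.intervalIntegrable (by fun_prop) _ _)
    (Continuous.intervalIntegrable (by fun_prop) _ _), intervalIntegral.integral_const_mul,
    intervalIntegral.integral_const_mul, integral_sin_sq_mul_cos_sq, integral_cos_sq,
    cos_neg, sin_neg, cos_pi_div_two, show 4 * (π / 2) = 2 * π by ring,
    show 4 * -(π / 2) = -(2 * π) by ring, sin_neg, sin_two_pi]
  ring

theorem cT_sq {t : ℝ} (ht : -1 / 12 ≤ t) (ht0 : t ≠ 0) :
    cT t ^ 2 = 8 / (√(1 + 12 * t) + 1) := by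
  have hu := sq_sqrt (show 0 ≤ 1 + 12 * t by linarith)
  set u := √(1 + 12 * t)
  have hu1 : 0 < u + 1 := by positivity
  have harg : 2 / (3 * t) * (u - 1) = 8 / (u + 1) := by
    field_simp
    linear_combination 2 * hu
  rw [cT, harg, sq_sqrt (div_nonneg (by norm_num) hu1.le)]

theorem mul_cT_sq_mul_sub_DT {t : ℝ} (ht : -1 / 12 ≤ t) (ht0 : t ≠ 0) :
    t * cT t ^ 2 * (cT t ^ 2 - 4 * DT t) = 16 := by
  have hu := sq_sqrt (show 0 ≤ 1 + 12 * t by linarith)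
  rw [cT_sq ht ht0, DT]
  set u := √(1 + 12 * t)
  have hu1 : u + 1 ≠ 0 := by positivity
  field_simp
  linear_combination -16 * hu

/-- For `t ≥ -1/12`, `t ≠ 0`, the equilibrium density of the external field
`V_t` integrates to one over `[-c_t, c_t]`. -/
theorem stmt6 (t : ℝ) (ht : -1/12 ≤ t) (ht0 : t ≠ 0) :
    ∫ x in (-(cT t))..(cT t), eqDensity t x = 1 := by
  have hc : 0 ≤ cT t := sqrt_nonneg _
  simp only [eqDensity, mul_assoc, intervalIntegral.integral_const_mul]
  rw [integral_sq_sub_mul_sqrt_sq_sub_sq hc]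
  field_simp
  linear_combination mul_cT_sq_mul_sub_DT ht ht0
end

section
/- Let t be a real number with t ≥ −1/12 and t ≠ 0. Then for every real z > c_t: ∫_{−c_t}^{c_t} [(t/(2π))·(x² − D_t)·√(c_t² − x²)] / (z − x) dx = (z + t·z³)/2 − (t/2)·(z² − D_t)·√(z² − c_t²). In other words, the Stieltjes transform of the equilibrium measure μ_t at z equals V_t'(z)/2 − (t/2)·(z² − D_t)·√(z² − c_t²). -/
open MeasureTheory

/-!
Splitting `x² − D = (x² − z²) + (z² − D)` reduces the integral to the moments
`∫ √(c² − x²) = π c² / 2` and `∫ x √(c² − x²) = 0` over `[-c, c]` and to the Stieltjes transform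
of the semicircle, `∫ √(c² − x²) / (z − x) = π (z − √(z² − c²))`. The latter has the explicit
primitive `z arcsin (x / c) − √(c² − x²) + √(z² − c²) arcsin ((c² − z x) / (c (z − x)))`, whose
last argument runs from `1` to `-1` on `[-c, c]`. The constants then combine through
`t c_t² / 2 + t D_t = -1`.
-/

open Real Set

theorem HasDerivAt.arcsin {f : ℝ → ℝ} {f' x : ℝ} (hf : HasDerivAt f f' x) (h : f x ^ 2 < 1) :
    HasDerivAt (fun y => arcsin (f y)) (f' / √(1 - f x ^ 2)) x := by
  have hne : ∀ a : ℝ, a ^ 2 < 1 → a ≠ -1 ∧ a ≠ 1 := fun a ha =>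
    ⟨fun h => by norm_num [h] at ha, fun h => by norm_num [h] at ha⟩
  exact ((hasDerivAt_arcsin (hne _ h).1 (hne _ h).2).comp x hf).congr_deriv (by ring)

section Semicircle

variable {c z x : ℝ}

theorem integral_sqrt_sq_sub_sq (hc : 0 < c) :
    ∫ x in -c..c, √(c ^ 2 - x ^ 2) = π * c ^ 2 / 2 := by
  have hscale : ∀ x, √(c ^ 2 - x ^ 2) = c * √(1 - (x / c) ^ 2) := fun x => by
    rw [show c ^ 2 - x ^ 2 = c ^ 2 * (1 - (x / c) ^ 2) by field_simp, sqrt_mul (sq_nonneg c),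
      sqrt_sq hc.le]
  simp_rw [hscale]
  rw [intervalIntegral.integral_const_mul,
    intervalIntegral.integral_comp_div (fun y => √(1 - y ^ 2)) hc.ne', neg_div, div_self hc.ne',
    integral_sqrt_one_sub_sq, smul_eq_mul]
  ring

theorem integral_mul_sqrt_sq_sub_sq_s7 : ∫ x in -c..c, x * √(c ^ 2 - x ^ 2) = 0 := by
  have hodd := intervalIntegral.integral_comp_neg (a := -c) (b := c)
    fun x => x * √(c ^ 2 - x ^ 2)
  simp only [neg_neg, neg_mul, neg_sq, intervalIntegral.integral_neg] at hodd
  linarith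

theorem hasDerivAt_sqrt_sq_sub_sq (hx : x ^ 2 < c ^ 2) :
    HasDerivAt (fun y => √(c ^ 2 - y ^ 2)) (-x / √(c ^ 2 - x ^ 2)) x := by
  have hq := sqrt_pos.2 (sub_pos.2 hx)
  refine (((hasDerivAt_pow 2 x).const_sub (c ^ 2)).sqrt (sub_pos.2 hx).ne').congr_deriv ?_
  field_simp
  ring

theorem hasDerivAt_arcsin_div (hc : 0 < c) (hx : x ^ 2 < c ^ 2) :
    HasDerivAt (fun y => arcsin (y / c)) (1 / √(c ^ 2 - x ^ 2)) x := by
  have hlt : (x / c) ^ 2 < 1 := by rwa [div_pow, div_lt_one (by positivity)]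
  refine (((hasDerivAt_id' x).div_const c).arcsin hlt).congr_deriv ?_
  have hone : 1 - (x / c) ^ 2 = (√(c ^ 2 - x ^ 2) / c) ^ 2 := by
    rw [div_pow, div_pow, sq_sqrt (sub_pos.2 hx).le]
    field_simp
  rw [hone, sqrt_sq (by positivity)]
  field_simp

theorem hasDerivAt_arcsin_joukowski (hc : 0 < c) (hz : c < z) (hx : x ^ 2 < c ^ 2) :
    HasDerivAt (fun y => arcsin ((c ^ 2 - z * y) / (c * (z - y))))
      (-√(z ^ 2 - c ^ 2) / ((z - x) * √(c ^ 2 - x ^ 2))) x := by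
  have hxz : 0 < z - x := by nlinarith
  have hs := sqrt_pos.2 (show 0 < z ^ 2 - c ^ 2 by nlinarith)
  have hq := sqrt_pos.2 (sub_pos.2 hx)
  have hs2 := sq_sqrt (show 0 ≤ z ^ 2 - c ^ 2 by nlinarith)
  have hw : HasDerivAt (fun y => (c ^ 2 - z * y) / (c * (z - y)))
      (-(z ^ 2 - c ^ 2) / (c * (z - x) ^ 2)) x := by
    refine ((((hasDerivAt_id' x).const_mul z).const_sub (c ^ 2)).div
      (((hasDerivAt_id' x).const_sub z).const_mul c) (by positivity)).congr_deriv ?_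
    field_simp
    ring
  have hone : 1 - ((c ^ 2 - z * x) / (c * (z - x))) ^ 2
      = (√(z ^ 2 - c ^ 2) * √(c ^ 2 - x ^ 2) / (c * (z - x))) ^ 2 := by
    simp only [div_pow, mul_pow, hs2, sq_sqrt (sub_pos.2 hx).le]
    field_simp
    ring
  have hlt : ((c ^ 2 - z * x) / (c * (z - x))) ^ 2 < 1 := by
    have : 0 < (√(z ^ 2 - c ^ 2) * √(c ^ 2 - x ^ 2) / (c * (z - x))) ^ 2 := by positivity
    linarith
  refine (hw.arcsin hlt).congr_deriv ?_
  rw [hone, sqrt_sq (by positivity)]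
  field_simp
  rw [hs2]

theorem hasDerivAt_stieltjes_primitive (hc : 0 < c) (hz : c < z) (hx : x ^ 2 < c ^ 2) :
    HasDerivAt (fun y => z * arcsin (y / c) - √(c ^ 2 - y ^ 2)
        + √(z ^ 2 - c ^ 2) * arcsin ((c ^ 2 - z * y) / (c * (z - y))))
      (√(c ^ 2 - x ^ 2) / (z - x)) x := by
  have hxz : 0 < z - x := by nlinarith
  have hq := sqrt_pos.2 (sub_pos.2 hx)
  refine ((((hasDerivAt_arcsin_div hc hx).const_mul z).sub (hasDerivAt_sqrt_sq_sub_sq hx)).add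
    ((hasDerivAt_arcsin_joukowski hc hz hx).const_mul √(z ^ 2 - c ^ 2))).congr_deriv ?_
  field_simp
  rw [sq_sqrt (by nlinarith), sq_sqrt (sub_pos.2 hx).le]
  ring

theorem intervalIntegrable_sqrt_sq_sub_sq_div_sub (hc : 0 ≤ c) (hz : c < z) :
    IntervalIntegrable (fun x => √(c ^ 2 - x ^ 2) / (z - x)) volume (-c) c := by
  refine ContinuousOn.intervalIntegrable (ContinuousOn.div (by fun_prop) (by fun_prop) ?_)
  rw [uIcc_of_le (by linarith)]
  exact fun x hx => by linarith [hx.2]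

theorem integral_sqrt_sq_sub_sq_div_sub (hc : 0 < c) (hz : c < z) :
    ∫ x in -c..c, √(c ^ 2 - x ^ 2) / (z - x) = π * (z - √(z ^ 2 - c ^ 2)) := by
  have hsub : ∀ x ∈ Icc (-c) c, z - x ≠ 0 := fun x hx => by linarith [hx.2]
  have hcont : ContinuousOn (fun y => z * arcsin (y / c) - √(c ^ 2 - y ^ 2)
      + √(z ^ 2 - c ^ 2) * arcsin ((c ^ 2 - z * y) / (c * (z - y)))) (Icc (-c) c) := by
    refine ContinuousOn.add (by fun_prop) (continuousOn_const.mul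
      (continuous_arcsin.comp_continuousOn (ContinuousOn.div (by fun_prop) (by fun_prop) ?_)))
    exact fun x hx => mul_ne_zero hc.ne' (hsub x hx)
  rw [intervalIntegral.integral_eq_sub_of_hasDerivAt_of_le (by linarith) hcont
    (fun x hx => hasDerivAt_stieltjes_primitive hc hz (sq_lt_sq' hx.1 hx.2))
    (intervalIntegrable_sqrt_sq_sub_sq_div_sub hc.le hz)]
  have hright : (c ^ 2 - z * c) / (c * (z - c)) = -1 := by
    field_simp [hsub c ⟨by linarith, le_rfl⟩]
    ring
  have hleft : (c ^ 2 - z * -c) / (c * (z - -c)) = 1 := by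
    rw [div_eq_one_iff_eq (mul_ne_zero hc.ne' (hsub (-c) ⟨le_rfl, by linarith⟩))]
    ring
  simp only [hright, hleft, neg_div, div_self hc.ne', neg_sq, sub_self, sqrt_zero, arcsin_one,
    arcsin_neg_one]
  ring

theorem integral_sq_sub_mul_sqrt_div_sub (D : ℝ) (hc : 0 < c) (hz : c < z) :
    ∫ x in -c..c, (x ^ 2 - D) * √(c ^ 2 - x ^ 2) / (z - x)
      = π * ((z ^ 2 - D) * (z - √(z ^ 2 - c ^ 2)) - z * c ^ 2 / 2) := by
  have hsplit : EqOn (fun x => (x ^ 2 - D) * √(c ^ 2 - x ^ 2) / (z - x))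
      (fun x => (z ^ 2 - D) * (√(c ^ 2 - x ^ 2) / (z - x))
        - (x * √(c ^ 2 - x ^ 2) + z * √(c ^ 2 - x ^ 2))) (uIcc (-c) c) := fun x hx => by
    rw [uIcc_of_le (by linarith)] at hx
    have : z - x ≠ 0 := by linarith [hx.2]
    field_simp
    ring
  rw [intervalIntegral.integral_congr hsplit, intervalIntegral.integral_sub,
    intervalIntegral.integral_const_mul, intervalIntegral.integral_add,
    intervalIntegral.integral_const_mul, integral_sqrt_sq_sub_sq_div_sub hc hz,
    integral_mul_sqrt_sq_sub_sq_s7, integral_sqrt_sq_sub_sq hc]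
  · ring
  · exact Continuous.intervalIntegrable (by fun_prop) _ _
  · exact Continuous.intervalIntegrable (by fun_prop) _ _
  · exact (intervalIntegrable_sqrt_sq_sub_sq_div_sub hc.le hz).const_mul _
  · exact Continuous.intervalIntegrable (by fun_prop) _ _

end Semicircle

theorem cT_radicand_pos {t : ℝ} (ht0 : t ≠ 0) : 0 < 2 / (3 * t) * (√(1 + 12 * t) - 1) := by
  rcases ht0.lt_or_gt with ht | ht
  · have : √(1 + 12 * t) < 1 := (sqrt_lt' one_pos).2 (by linarith)
    exact mul_pos_of_neg_of_neg (div_neg_of_pos_of_neg two_pos (by linarith)) (by linarith)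
  · have : 1 < √(1 + 12 * t) := (lt_sqrt zero_le_one).2 (by linarith)
    exact mul_pos (by positivity) (by linarith)

theorem cT_pos {t : ℝ} (ht0 : t ≠ 0) : 0 < cT t := sqrt_pos.2 (cT_radicand_pos ht0)

theorem mul_cT_sq_div_two_add_mul_DT {t : ℝ} (ht0 : t ≠ 0) :
    t * cT t ^ 2 / 2 + t * DT t = -1 := by
  rw [cT, sq_sqrt (cT_radicand_pos ht0).le, DT]
  field_simp
  ring

theorem stmt7_general (t : ℝ) (ht0 : t ≠ 0) (z : ℝ) (hz : cT t < z) :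
    ∫ x in (-(cT t))..(cT t), eqDensity t x / (z - x)
      = (z + t * z ^ 3) / 2 - (t / 2) * (z ^ 2 - DT t) * Real.sqrt (z ^ 2 - (cT t) ^ 2) := by
  have hdensity : ∀ x, eqDensity t x / (z - x)
      = t / (2 * π) * ((x ^ 2 - DT t) * √(cT t ^ 2 - x ^ 2) / (z - x)) := fun x => by
    rw [eqDensity]
    ring
  simp_rw [hdensity]
  rw [intervalIntegral.integral_const_mul, integral_sq_sub_mul_sqrt_div_sub _ (cT_pos ht0) hz]
  field_simp
  linear_combination (-2 * z) * mul_cT_sq_div_two_add_mul_DT ht0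

/-- For `t ≥ -1/12`, `t ≠ 0` and real `z > c_t`, the Stieltjes transform of
the equilibrium measure equals `V_t'(z)/2 − (t/2)(z² − D_t)√(z² − c_t²)`. -/
theorem stmt7 (t : ℝ) (ht : -1/12 ≤ t) (ht0 : t ≠ 0) (z : ℝ) (hz : cT t < z) :
    ∫ x in (-(cT t))..(cT t), eqDensity t x / (z - x)
      = (z + t * z ^ 3) / 2 - (t / 2) * (z ^ 2 - DT t) * Real.sqrt (z ^ 2 - (cT t) ^ 2) :=
  stmt7_general t ht0 z hz
end

section
/- For every x ∈ (−√8, √8), the principal value integral lim_{ε→0⁺} [ ∫_{−√8}^{x−ε} (8 + 4y² − y⁴)/(2π·√(8 − y²)·(x − y)) dy + ∫_{x+ε}^{√8} (8 + 4y² − y⁴)/(2π·√(8 − y²)·(x − y)) dy ] exists and equals x³/2. -/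
/-!
Subtracting the value of the numerator at `x` splits `v°(y)/(x - y)` into `v°(x)` times the finite
Hilbert kernel `√(8 - x²)/(√(8 - y²)(x - y))` plus `-(y + x)(4 - x² - y²)/(2π√(8 - y²))`. Both have
elementary antiderivatives: `log (8 - xy + √(8 - x²)√(8 - y²)) - log |x - y|` for the kernel and a
polynomial in `y, √(8 - y²)` plus a multiple of `arcsin (y/√8)` for the rest. The only singularity,
`-v°(x) log |x - y|`, is even about `x` and cancels in the principal value, which is therefore the
difference of the antiderivative between `±√8`. There the logarithmic terms agree and the `arcsin`
term contributes `x³/2`.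
-/

open MeasureTheory Filter Set Real Topology

theorem tendsto_principalValue_of_hasDerivAt {f H : ℝ → ℝ} {a b x c : ℝ} (hax : a < x)
    (hxb : x < b) (hH : ContinuousOn H (Icc a b))
    (hderiv : ∀ y ∈ Ioo a b, y ≠ x → HasDerivAt (fun t => H t - c * log (x - t)) (f y) y)
    (hfa : ∀ u ∈ Ioo a x, IntervalIntegrable f volume a u)
    (hfb : ∀ u ∈ Ioo x b, IntervalIntegrable f volume u b) :
    Tendsto (fun ε => (∫ y in a..x - ε, f y) + ∫ y in x + ε..b, f y) (𝓝[>] 0)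
      (𝓝 (H b - c * log (x - b) - (H a - c * log (x - a)))) := by
  set G : ℝ → ℝ := fun t => H t - c * log (x - t)
  have hGcont : ContinuousOn G (Icc a b \ {x}) := by
    refine (hH.mono sdiff_subset).sub (continuousOn_const.mul ?_)
    exact (continuousOn_const.sub continuousOn_id).log fun t ht => sub_ne_zero.2 (Ne.symm ht.2)
  have hFTC : ∀ u v, a ≤ u → u ≤ v → v ≤ b → x ∉ Icc u v →
      IntervalIntegrable f volume u v → ∫ y in u..v, f y = G v - G u := by
    intro u v hau huv hvb hx hint
    refine intervalIntegral.integral_eq_sub_of_hasDeriv_right_of_le huv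
      (hGcont.mono fun t ht => ⟨⟨hau.trans ht.1, ht.2.trans hvb⟩, fun h => hx (h ▸ ht)⟩)
      (fun t ht => (hderiv t ⟨hau.trans_lt ht.1, ht.2.trans_le hvb⟩ ?_).hasDerivWithinAt) hint
    rintro rfl
    exact hx (Ioo_subset_Icc_self ht)
  -- the logarithmic singularities `log ε` and `log (-ε)` of `G (x - ε)` and `G (x + ε)` cancel
  have hsym : ∀ ε, G (x - ε) - G (x + ε) = H (x - ε) - H (x + ε) := by
    intro ε
    simp only [G, sub_sub_cancel, sub_add_cancel_left, log_neg_eq_log]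
    ring
  have hHx : ContinuousAt H x := hH.continuousAt (Icc_mem_nhds hax hxb)
  have hlim : Tendsto (fun ε => H (x - ε) - H (x + ε)) (𝓝[>] 0) (𝓝 0) := by
    have h : Tendsto (fun ε => H (x - ε) - H (x + ε)) (𝓝 0) (𝓝 (H (x - 0) - H (x + 0))) :=
      ((hHx.comp_of_eq (by fun_prop) (sub_zero x)).sub
        (hHx.comp_of_eq (by fun_prop) (add_zero x))).tendsto
    simpa using h.mono_left nhdsWithin_le_nhds
  refine ((hlim.add_const (G b - G a)).congr' ?_).trans (by simp [G])
  filter_upwards [Ioo_mem_nhdsGT (lt_min (sub_pos.2 hax) (sub_pos.2 hxb))] with ε ⟨hε, hεx⟩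
  have hxa : a < x - ε := by linarith [min_le_left (x - a) (b - x)]
  have hxb' : x + ε < b := by linarith [min_le_right (x - a) (b - x)]
  rw [hFTC a (x - ε) le_rfl hxa.le (by linarith) (fun h => by linarith [h.2])
      (hfa _ ⟨hxa, by linarith⟩),
    hFTC (x + ε) b (by linarith) hxb'.le le_rfl (fun h => by linarith [h.1])
      (hfb _ ⟨by linarith, hxb'⟩), ← hsym]
  ring

section SqrtSubSq

variable {a x y : ℝ}

theorem hasDerivAt_sqrt_sub_sq (hy : y ^ 2 < a) :
    HasDerivAt (fun t => √(a - t ^ 2)) (-y / √(a - y ^ 2)) y := by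
  have h := ((hasDerivAt_pow 2 y).const_sub a).sqrt (sub_pos.2 hy).ne'
  convert h using 1
  field_simp
  ring

theorem hasDerivAt_arcsin_div_sqrt (hy : y ^ 2 < a) :
    HasDerivAt (fun t => arcsin (t / √a)) (√(a - y ^ 2))⁻¹ y := by
  have ha : 0 < a := (sq_nonneg y).trans_lt hy
  have hsa : 0 < √a := sqrt_pos.2 ha
  obtain ⟨hy₁, hy₂⟩ := sq_lt.1 hy
  have h := (hasDerivAt_arcsin (x := y / √a) (by rw [ne_eq, div_eq_iff hsa.ne']; linarith)
    (by rw [ne_eq, div_eq_iff hsa.ne']; linarith)).comp y ((hasDerivAt_id y).div_const √a)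
  refine h.congr_deriv ?_
  have h1 : 1 - (y / √a) ^ 2 = (a - y ^ 2) / a := by
    field_simp
    rw [sq_sqrt ha.le]
    ring
  rw [h1, sqrt_div' _ ha.le]
  field_simp

theorem intervalIntegrable_inv_sqrt_sub_sq (ha : 0 < a) :
    IntervalIntegrable (fun t => (√(a - t ^ 2))⁻¹) volume (-√a) √a := by
  have hsa : 0 < √a := sqrt_pos.2 ha
  refine intervalIntegral.intervalIntegrable_deriv_of_nonneg (g := fun t => arcsin (t / √a))
    (by fun_prop) (fun t ht => hasDerivAt_arcsin_div_sqrt (sq_lt.2 ?_)) (fun t _ => by positivity)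
  simpa [min_eq_left, max_eq_right, (neg_lt_self hsa).le] using ht

theorem sub_mul_add_sqrt_mul_sqrt_pos (hx : x ^ 2 < a) (hy : y ^ 2 ≤ a) :
    0 < a - x * y + √(a - x ^ 2) * √(a - y ^ 2) := by
  have : 0 ≤ √(a - x ^ 2) * √(a - y ^ 2) := by positivity
  nlinarith [sq_nonneg (x - y)]

-- Valid on both sides of `x`: `Real.log` of a negative number is the `log` of its absolute value.
theorem hasDerivAt_log_hilbertKernel (hx : x ^ 2 < a) (hy : y ^ 2 < a) (hxy : x ≠ y) :
    HasDerivAt (fun t => log (a - x * t + √(a - x ^ 2) * √(a - t ^ 2)) - log (x - t))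
      (√(a - x ^ 2) / (√(a - y ^ 2) * (x - y))) y := by
  have hD := sub_mul_add_sqrt_mul_sqrt_pos hx hy.le
  have hw : 0 < √(a - y ^ 2) := sqrt_pos.2 (sub_pos.2 hy)
  have hw2 : √(a - y ^ 2) ^ 2 = a - y ^ 2 := sq_sqrt (sub_pos.2 hy).le
  have hs2 : √(a - x ^ 2) ^ 2 = a - x ^ 2 := sq_sqrt (sub_pos.2 hx).le
  have hxy' : x - y ≠ 0 := sub_ne_zero.2 hxy
  have hlogD := ((((hasDerivAt_id y).const_mul x).const_sub a).add
    ((hasDerivAt_sqrt_sub_sq hy).const_mul √(a - x ^ 2))).log hD.ne'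
  have hlog := (((hasDerivAt_id y).const_sub x).log hxy')
  simp only [Pi.add_apply, id, mul_one] at hlogD hlog
  refine (hlogD.sub hlog).congr_deriv ?_
  field_simp
  linear_combination √(a - x ^ 2) * hw2 - √(a - y ^ 2) * hs2

end SqrtSubSq

namespace QuarticEquilibrium

noncomputable def density (y : ℝ) : ℝ := (8 + 4 * y ^ 2 - y ^ 4) / (2 * π * √(8 - y ^ 2))

noncomputable def remainderAntideriv (x y : ℝ) : ℝ :=
  √(8 - y ^ 2) * (4 + x ^ 2 + x * y / 2) - (8 - y ^ 2) * √(8 - y ^ 2) / 3 - x ^ 3 * arcsin (y / √8)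

noncomputable def regularPart (x y : ℝ) : ℝ :=
  density x * log (8 - x * y + √(8 - x ^ 2) * √(8 - y ^ 2)) - remainderAntideriv x y / (2 * π)

variable {x y : ℝ}

theorem hasDerivAt_remainderAntideriv (hy : y ^ 2 < 8) :
    HasDerivAt (remainderAntideriv x) ((y + x) * (4 - x ^ 2 - y ^ 2) / √(8 - y ^ 2)) y := by
  have hw : 0 < √(8 - y ^ 2) := sqrt_pos.2 (sub_pos.2 hy)
  have hw2 : √(8 - y ^ 2) ^ 2 = 8 - y ^ 2 := sq_sqrt (sub_pos.2 hy).le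
  have hsqrt := hasDerivAt_sqrt_sub_sq hy
  have hlin : HasDerivAt (fun t => 4 + x ^ 2 + x * t / 2) (x / 2) y := by
    simpa using (((hasDerivAt_id y).const_mul x).div_const 2).const_add (4 + x ^ 2)
  have hcube := (((hasDerivAt_pow 2 y).const_sub 8).mul hsqrt).div_const 3
  have h := ((hsqrt.mul hlin).sub hcube).sub ((hasDerivAt_arcsin_div_sqrt hy).const_mul (x ^ 3))
  refine h.congr_deriv ?_
  field_simp
  linear_combination (3 * x + 4 * y) * hw2

-- The numerator `P(y) = 8 + 4y² - y⁴` satisfies `P(y) - P(x) = (y - x)(y + x)(4 - x² - y²)`.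
theorem density_div_sub_eq (hx : x ^ 2 < 8) (hy : y ^ 2 < 8) (hxy : x ≠ y) :
    density y / (x - y) = density x * (√(8 - x ^ 2) / (√(8 - y ^ 2) * (x - y)))
      - (y + x) * (4 - x ^ 2 - y ^ 2) / √(8 - y ^ 2) / (2 * π) := by
  have hs : 0 < √(8 - x ^ 2) := sqrt_pos.2 (sub_pos.2 hx)
  have hw : 0 < √(8 - y ^ 2) := sqrt_pos.2 (sub_pos.2 hy)
  have hxy' : x - y ≠ 0 := sub_ne_zero.2 hxy
  unfold density
  field_simp
  ring

theorem hasDerivAt_regularPart_sub_log (hx : x ^ 2 < 8) (hy : y ^ 2 < 8) (hxy : x ≠ y) :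
    HasDerivAt (fun t => regularPart x t - density x * log (x - t)) (density y / (x - y)) y := by
  have h := ((hasDerivAt_log_hilbertKernel hx hy hxy).const_mul (density x)).sub
    ((hasDerivAt_remainderAntideriv (x := x) hy).div_const (2 * π))
  rw [density_div_sub_eq hx hy hxy]
  refine h.congr_of_eventuallyEq (Eventually.of_forall fun t => ?_)
  simp only [regularPart, Pi.sub_apply]
  ring

theorem continuousOn_regularPart (hx : x ^ 2 < 8) :
    ContinuousOn (regularPart x) (Icc (-√8) √8) := by
  have hD : ∀ t ∈ Icc (-√8) √8, 8 - x * t + √(8 - x ^ 2) * √(8 - t ^ 2) ≠ 0 := fun t ht =>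
    (sub_mul_add_sqrt_mul_sqrt_pos hx ((Real.sq_le (by norm_num)).2 ht)).ne'
  unfold regularPart remainderAntideriv
  exact ContinuousOn.sub (continuousOn_const.mul (ContinuousOn.log (by fun_prop) hD))
    (by fun_prop)

theorem intervalIntegrable_density_div_sub {c d : ℝ} (hc : -√8 ≤ c) (hcd : c ≤ d)
    (hd : d ≤ √8) (hx : x ∉ Icc c d) :
    IntervalIntegrable (fun y => density y / (x - y)) volume c d := by
  have hw := (intervalIntegrable_inv_sqrt_sub_sq (a := 8) (by norm_num)).mono_set
    (by rw [uIcc_of_le hcd, uIcc_of_le (hc.trans (hcd.trans hd))]; exact Icc_subset_Icc hc hd)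
  have hcont : ContinuousOn (fun y => (8 + 4 * y ^ 2 - y ^ 4) / (2 * π) / (x - y)) (uIcc c d) := by
    rw [uIcc_of_le hcd]
    refine ContinuousOn.div (by fun_prop) (by fun_prop) fun y hy => ?_
    exact sub_ne_zero.2 fun h => hx (h ▸ hy)
  convert hw.continuousOn_mul hcont using 1
  funext y
  simp only [density]
  ring

theorem regularPart_boundary (hx : x ^ 2 < 8) :
    regularPart x √8 - density x * log (x - √8)
      - (regularPart x (-√8) - density x * log (x - -√8)) = x ^ 3 / 2 := by
  obtain ⟨hx₁, hx₂⟩ := sq_lt.1 hx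
  have h8 : 0 < √8 := by positivity
  have hsq : √8 ^ 2 = 8 := sq_sqrt (by norm_num)
  have hw : √(8 - √8 ^ 2) = 0 := by rw [hsq, sub_self, sqrt_zero]
  have hw' : √(8 - (-√8) ^ 2) = 0 := by rw [neg_sq, hw]
  have hlog : log (8 - x * √8) - log (x - √8) = log √8 := by
    rw [show 8 - x * √8 = √8 * (√8 - x) by linear_combination -hsq, show x - √8 = -(√8 - x) by ring,
      log_mul h8.ne' (by linarith), log_neg_eq_log]
    ring
  have hlog' : log (8 - x * -√8) - log (x - -√8) = log √8 := by
    rw [show 8 - x * -√8 = √8 * (x + √8) by linear_combination -hsq, sub_neg_eq_add,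
      log_mul h8.ne' (by linarith)]
    ring
  have hc : remainderAntideriv x √8 / (2 * π) = -(x ^ 3 / 4) := by
    rw [remainderAntideriv, hw, div_self h8.ne', arcsin_one]
    field_simp
    ring
  have hc' : remainderAntideriv x (-√8) / (2 * π) = x ^ 3 / 4 := by
    rw [remainderAntideriv, hw', neg_div, div_self h8.ne', arcsin_neg, arcsin_one]
    field_simp
    ring
  simp only [regularPart, hc, hc', hw, hw', mul_zero, add_zero]
  linear_combination density x * (hlog - hlog')

end QuarticEquilibrium

/-- For `x ∈ (−√8, √8)`, the principal value of
`∫ (8 + 4y² − y⁴)/(2π√(8 − y²)(x − y)) dy` over `(−√8, √8)` exists and equals `x³/2`. -/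
theorem stmt9 (x : ℝ) (hx : x ∈ Set.Ioo (-Real.sqrt 8) (Real.sqrt 8)) :
    Tendsto (fun ε : ℝ =>
        (∫ y in (-Real.sqrt 8)..(x - ε),
          (8 + 4 * y ^ 2 - y ^ 4) / (2 * Real.pi * Real.sqrt (8 - y ^ 2) * (x - y)))
        + ∫ y in (x + ε)..(Real.sqrt 8),
          (8 + 4 * y ^ 2 - y ^ 4) / (2 * Real.pi * Real.sqrt (8 - y ^ 2) * (x - y)))
      (nhdsWithin 0 (Set.Ioi 0)) (nhds (x ^ 3 / 2)) := by
  have hx2 : x ^ 2 < 8 := sq_lt.2 hx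
  open QuarticEquilibrium in
  have hpv := tendsto_principalValue_of_hasDerivAt (f := fun y => density y / (x - y))
    hx.1 hx.2 (continuousOn_regularPart hx2)
    (fun y hy hyx => hasDerivAt_regularPart_sub_log hx2 (sq_lt.2 hy) (Ne.symm hyx))
    (fun u hu => intervalIntegrable_density_div_sub le_rfl hu.1.le (hu.2.trans hx.2).le
      fun h => (h.2.trans_lt hu.2).false)
    (fun u hu => intervalIntegrable_density_div_sub (hx.1.trans hu.1).le hu.2.le le_rfl
      fun h => (hu.1.trans_le h.1).false)
  rw [QuarticEquilibrium.regularPart_boundary hx2] at hpv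
  simpa only [QuarticEquilibrium.density, div_div] using hpv
end
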